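/- Let S ⊂ Z_{>0} be a finite set of positive integers and let n ≥ 1 be an integer with S ⊆ [n−1]. For 1 ≤ k ≤ n define b_k(S,n;q) = Σ q^{ℓ(w)}, the sum being over all w ∈ A(S;n) with w(n) = k. Then the sequence (b_k(S,n;q))_{k=1,...,n} is strongly q-log concave. -/

import Mathlib

open Polynomial Finset

noncomputable section

/-- The number of inversions (the Coxeter length) of a permutation of `Fin n`. -/
def invNum {n : ℕ} (π : Equiv.Perm (Fin n)) : ℕ :=
  (Finset.univ.filter fun p : Fin n × Fin n => p.1 < p.2 ∧ π p.2 < π p.1).card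

/-- The descent set of a permutation, as a set of positive integers (1-indexed positions):
`i ∈ Des(π)` iff `1 ≤ i ≤ n-1` and `π_i > π_{i+1}` in one-line notation. -/
def DesSet {n : ℕ} (π : Equiv.Perm (Fin n)) : Finset ℕ :=
  (Finset.univ.filter fun a : Fin n => ∃ b : Fin n, (a : ℕ) + 1 = (b : ℕ) ∧ π b < π a).image
    fun a : Fin n => (a : ℕ) + 1

/-- The peak set of a permutation (1-indexed positions):
`i ∈ Peak(π)` iff `2 ≤ i ≤ n-1` and `π_{i-1} < π_i > π_{i+1}` in one-line notation. -/
def PeakSet {n : ℕ} (π : Equiv.Perm (Fin n)) : Finset ℕ :=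
  (Finset.univ.filter fun b : Fin n =>
      ∃ a c : Fin n, (a : ℕ) + 1 = (b : ℕ) ∧ (b : ℕ) + 1 = (c : ℕ) ∧ π a < π b ∧ π c < π b).image
    fun b : Fin n => (b : ℕ) + 1

/-- The q-integer `[j]_q = 1 + q + ⋯ + q^(j-1)`. -/
def qNum (j : ℕ) : Polynomial ℝ := ∑ i ∈ Finset.range j, X ^ i

/-- The q-factorial `[n]!_q = [1]_q [2]_q ⋯ [n]_q`. -/
def qFactorial : ℕ → Polynomial ℝ
  | 0 => 1
  | n + 1 => qFactorial n * qNum (n + 1)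

/-- The q-binomial coefficient `[n choose k]_q = [n]!_q / ([k]!_q [n-k]!_q)`.
(The divisor is monic and the division is exact, so `divByMonic` gives the true quotient.) -/
def qBinom (n k : ℕ) : Polynomial ℝ :=
  qFactorial n /ₘ (qFactorial k * qFactorial (n - k))

/-- `(−q;q)_k = (1+q)(1+q²)⋯(1+q^k)`. -/
def qPoch (k : ℕ) : Polynomial ℝ := ∏ i ∈ Finset.range k, (1 + X ^ (i + 1))

/-- `D_S(n,q) = Σ_{π ∈ 𝔖_n, Des(π) = S} q^{ℓ(π)}`. -/
def Dpoly (S : Finset ℕ) (n : ℕ) : Polynomial ℝ :=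
  ∑ π ∈ Finset.univ.filter (fun π : Equiv.Perm (Fin n) => DesSet π = S), X ^ invNum π

/-- `P_S(n,q) = Σ_{π ∈ 𝔖_n, Peak(π) = S} q^{ℓ(π)}`. -/
def Ppoly (S : Finset ℕ) (n : ℕ) : Polynomial ℝ :=
  ∑ π ∈ Finset.univ.filter (fun π : Equiv.Perm (Fin n) => PeakSet π = S), X ^ invNum π

/-- `Q_S(n,q) = Σ_{π ∈ 𝔖_n, Peak(π) ⊇ S} q^{ℓ(π)}`. -/
def Qpoly (S : Finset ℕ) (n : ℕ) : Polynomial ℝ :=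
  ∑ π ∈ Finset.univ.filter (fun π : Equiv.Perm (Fin n) => S ⊆ PeakSet π), X ^ invNum π

/-- The sequence `(a i)` for `lo ≤ i ≤ hi` is strongly q-log concave: it has no internal
zeroes and `a i * a j - a (i-1) * a (j+1)` has nonnegative coefficients for `lo < i ≤ j < hi`. -/
def StronglyQLogConcave (lo hi : ℕ) (a : ℕ → Polynomial ℝ) : Prop :=
  (∀ i j l : ℕ, lo ≤ i → i < j → j < l → l ≤ hi → a i ≠ 0 → a l ≠ 0 → a j ≠ 0) ∧
  ∀ i j : ℕ, lo < i → i ≤ j → j < hi → ∀ m : ℕ,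
    0 ≤ (a i * a j - a (i - 1) * a (j + 1)).coeff m


/-- `b_k(S,n;q) = Σ q^{ℓ(w)}` over `w ∈ A(S;n)` with `w(n) = k` (one-line notation,
positions and values 1-indexed). -/
def bkpoly (S : Finset ℕ) (n k : ℕ) : Polynomial ℝ :=
  ∑ w ∈ Finset.univ.filter (fun w : Equiv.Perm (Fin n) =>
      DesSet w = S ∧ ∃ j : Fin n, (j : ℕ) + 1 = n ∧ (w j : ℕ) + 1 = k),
    X ^ invNum w

/-!
Deleting the last entry `i` of `w ∈ A(S; r+2)` and standardizing the remaining values gives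
`σ ∈ 𝔖_{r+1}` with `ℓ(w) = ℓ(σ) + (r+2-i)`, and `r+1` is a descent of `w` exactly when
`σ(r+1) ≥ i`. Hence `b_i(S, r+2) = q^{r+2-i} ∑_{k<i} b_k(S, r+1)` if `r+1 ∉ S`, and
`b_i(S, r+2) = q^{r+2-i} ∑_{i≤k≤r+1} b_k(S∖{r+1}, r+1)` if `r+1 ∈ S`.

For a sequence with nonnegative coefficients, iterating `a_{i-1} a_{j+1} ≤ a_i a_j` gives
`a_x a_y ≤ a_{x'} a_{y'}` whenever `x ≤ x', y' ≤ y` and `x + y = x' + y'`. The difference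
`A_i A_j - A_{i-1} A_{j+1}` for prefix (or suffix) sums `A` collapses to a difference of two
sums of such products, which are compared termwise after an index shift. The factors `q^{n-i}`
contribute the same power to both products, and nonvanishing propagates along partial sums,
so induction on `n` concludes.
-/

lemma sum_le_sum_of_injOn {ι κ M : Type*} [AddCommMonoid M] [PartialOrder M]
    [IsOrderedAddMonoid M] {s : Finset ι} {t : Finset κ} {f : ι → M} {g : κ → M} (e : ι → κ)
    (hst : Set.MapsTo e s t) (he : Set.InjOn e s) (hg : ∀ k ∈ t, 0 ≤ g k)
    (hfg : ∀ i ∈ s, f i ≤ g (e i)) : ∑ i ∈ s, f i ≤ ∑ k ∈ t, g k := by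
  classical
  calc ∑ i ∈ s, f i ≤ ∑ i ∈ s, g (e i) := sum_le_sum hfg
    _ = ∑ k ∈ s.image e, g k := (sum_image he).symm
    _ ≤ ∑ k ∈ t, g k :=
      sum_le_sum_of_subset_of_nonneg (image_subset_iff.2 hst) fun k hk _ => hg k hk

def CoeffNonneg (p : ℝ[X]) : Prop := ∀ m, 0 ≤ p.coeff m

lemma CoeffNonneg.mul {p q : ℝ[X]} (hp : CoeffNonneg p) (hq : CoeffNonneg q) :
    CoeffNonneg (p * q) :=
  fun m => by rw [coeff_mul]; exact sum_nonneg fun x _ => mul_nonneg (hp _) (hq _)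

lemma CoeffNonneg.X_pow_mul {p : ℝ[X]} (hp : CoeffNonneg p) (e : ℕ) :
    CoeffNonneg (X ^ e * p) :=
  fun m => by rw [coeff_X_pow_mul']; split_ifs <;> simp [hp _]

lemma coeffNonneg_sum {ι : Type*} (s : Finset ι) {f : ι → ℝ[X]} (hf : ∀ i, CoeffNonneg (f i)) :
    CoeffNonneg (∑ i ∈ s, f i) :=
  fun m => by rw [finsetSum_coeff]; exact sum_nonneg fun i _ => hf i m

lemma CoeffNonneg.add_ne_zero {p q : ℝ[X]} (hp : CoeffNonneg p) (hq : CoeffNonneg q)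
    (hp0 : p ≠ 0) : p + q ≠ 0 := by
  obtain ⟨m, hm⟩ := Polynomial.ext_iff.not.1 hp0 |> not_forall.1
  intro hpq
  have := congrArg (coeff · m) hpq
  simp only [coeff_add, coeff_zero] at this hm
  linarith [lt_of_le_of_ne (hp m) (Ne.symm hm), hq m]

lemma sum_ne_zero_of_subset {ι : Type*} {s t : Finset ι} {f : ι → ℝ[X]}
    (hf : ∀ i, CoeffNonneg (f i)) (hst : s ⊆ t) (hs : ∑ i ∈ s, f i ≠ 0) : ∑ i ∈ t, f i ≠ 0 := by
  classical
  rw [← sum_sdiff hst, add_comm]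
  exact (coeffNonneg_sum s hf).add_ne_zero (coeffNonneg_sum _ hf) hs

def QLogConcaveOn (lo hi : ℕ) (a : ℕ → ℝ[X]) : Prop :=
  ∀ i j, lo < i → i ≤ j → j < hi → CoeffNonneg (a i * a j - a (i - 1) * a (j + 1))

namespace QLogConcaveOn

variable {lo hi : ℕ} {a : ℕ → ℝ[X]}

lemma coeff_le (h : QLogConcaveOn lo hi a) {i j : ℕ} (hlo : lo < i) (hij : i ≤ j) (hhi : j < hi)
    (m : ℕ) : (a (i - 1) * a (j + 1)).coeff m ≤ (a i * a j).coeff m := by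
  simpa [sub_nonneg] using h i j hlo hij hhi m

lemma coeff_mul_le_of_add (h : QLogConcaveOn lo hi a) (d : ℕ) {x u : ℕ} (hlo : lo ≤ x)
    (hxu : x + d ≤ u) (hhi : u + d ≤ hi) (m : ℕ) :
    (a x * a (u + d)).coeff m ≤ (a (x + d) * a u).coeff m := by
  induction d generalizing x with
  | zero => rfl
  | succ d ih =>
    calc (a x * a (u + (d + 1))).coeff m ≤ (a (x + 1) * a (u + d)).coeff m :=
          h.coeff_le (i := x + 1) (j := u + d) (by omega) (by omega) (by omega) m
      _ ≤ (a (x + 1 + d) * a u).coeff m := ih (x := x + 1) (by omega) (by omega) (by omega)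
      _ = (a (x + (d + 1)) * a u).coeff m := by rw [add_right_comm, add_assoc]

lemma coeff_mul_le (h : QLogConcaveOn lo hi a) {x y x' y' : ℕ} (hlo : lo ≤ x) (hxx' : x ≤ x')
    (hxy' : x ≤ y') (hx'y : x' ≤ y) (hy'y : y' ≤ y) (hhi : y ≤ hi) (hsum : x + y = x' + y')
    (m : ℕ) : (a x * a y).coeff m ≤ (a x' * a y').coeff m := by
  rcases le_total x' y' with hle | hle
  · obtain ⟨d, rfl⟩ := Nat.exists_eq_add_of_le hxx'
    obtain rfl : y = y' + d := by omega
    exact h.coeff_mul_le_of_add d hlo hle hhi m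
  · obtain ⟨d, rfl⟩ := Nat.exists_eq_add_of_le hxy'
    obtain rfl : y = x' + d := by omega
    rw [mul_comm (a x')]
    exact h.coeff_mul_le_of_add d hlo hle hhi m

lemma of_apply_zero (hnn : ∀ k, CoeffNonneg (a k)) (h0 : a 0 = 0) (h : QLogConcaveOn 1 hi a) :
    QLogConcaveOn 0 hi a := by
  intro i j hlo hij hhi
  rcases Nat.lt_or_ge 1 i with h1 | h1
  · exact h i j h1 hij hhi
  · obtain rfl : i = 1 := by omega
    simpa [h0] using (hnn 1).mul (hnn j)

lemma prefixSums (hnn : ∀ k, CoeffNonneg (a k)) (h : QLogConcaveOn 0 hi a) :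
    QLogConcaveOn 1 (hi + 1) fun i => ∑ k ∈ range i, a k := by
  intro i j hlo hij hhi m
  obtain ⟨p, rfl⟩ : ∃ p, i = p + 1 := ⟨i - 1, by omega⟩
  have hsplit : (∑ k ∈ range (p + 1), a k) * (∑ l ∈ range j, a l)
      - (∑ k ∈ range (p + 1 - 1), a k) * (∑ l ∈ range (j + 1), a l)
      = a p * ∑ l ∈ range j, a l - (∑ k ∈ range p, a k) * a j := by
    rw [Nat.add_sub_cancel, sum_range_succ, sum_range_succ]
    ring
  rw [hsplit, mul_sum, sum_mul, coeff_sub, sub_nonneg, finsetSum_coeff, finsetSum_coeff]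
  refine sum_le_sum_of_injOn (· + (j - p)) (fun k hk => ?_) (fun k _ l _ hkl => ?_)
    (fun l _ => (hnn p).mul (hnn l) m) (fun k hk => ?_)
  · simp only [coe_range, Set.mem_Iio] at hk ⊢; omega
  · simpa using hkl
  · rw [mem_range] at hk
    exact h.coeff_mul_le (x' := p) (Nat.zero_le k) (by omega) (by omega) (by omega) (by omega)
      (by omega) (by omega) m

lemma suffixSums (hnn : ∀ k, CoeffNonneg (a k)) (h : QLogConcaveOn 1 hi a) :
    QLogConcaveOn 1 (hi + 1) fun i => ∑ k ∈ Icc i hi, a k := by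
  intro i j hlo hij hhi m
  have hsplit : (∑ k ∈ Icc i hi, a k) * (∑ l ∈ Icc j hi, a l)
      - (∑ k ∈ Icc (i - 1) hi, a k) * (∑ l ∈ Icc (j + 1) hi, a l)
      = (∑ k ∈ Icc i hi, a k) * a j - a (i - 1) * ∑ l ∈ Icc (j + 1) hi, a l := by
    rw [← insert_Icc_add_one_left_eq_Icc (by omega : j ≤ hi),
      ← insert_Icc_add_one_left_eq_Icc (by omega : i - 1 ≤ hi), Nat.sub_add_cancel (by omega),
      sum_insert (by simp), sum_insert (by simp; omega)]
    ring
  rw [hsplit, mul_sum, sum_mul, coeff_sub, sub_nonneg, finsetSum_coeff, finsetSum_coeff]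
  refine sum_le_sum_of_injOn (· - (j + 1 - i)) (fun l hl => ?_) (fun l hl l' hl' hll' => ?_)
    (fun k _ => (hnn k).mul (hnn j) m) (fun l hl => ?_)
  · simp only [coe_Icc, Set.mem_Icc] at hl ⊢; omega
  · simp only [coe_Icc, Set.mem_Icc] at hl hl'
    simp only at hll'
    omega
  · simp only [mem_Icc] at hl
    exact h.coeff_mul_le (x := i - 1) (x' := l - (j + 1 - i)) (by omega) (by omega) (by omega)
      (by omega) (by omega) hl.2 (by omega) m

lemma X_pow_sub_mul (h : QLogConcaveOn lo hi a) {N : ℕ} (hN : hi ≤ N) :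
    QLogConcaveOn lo hi fun i => X ^ (N - i) * a i := by
  intro i j hlo hij hhi
  have hexp : N - (i - 1) + (N - (j + 1)) = N - i + (N - j) := by omega
  have hpow : (X : ℝ[X]) ^ (N - (i - 1)) * X ^ (N - (j + 1)) = X ^ (N - i) * X ^ (N - j) := by
    rw [← pow_add, ← pow_add, hexp]
  have hfactor : X ^ (N - i) * a i * (X ^ (N - j) * a j)
      - X ^ (N - (i - 1)) * a (i - 1) * (X ^ (N - (j + 1)) * a (j + 1))
      = X ^ (N - i + (N - j)) * (a i * a j - a (i - 1) * a (j + 1)) := by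
    rw [pow_add]
    linear_combination (-(a (i - 1) * a (j + 1))) * hpow
  rw [hfactor]
  exact (h i j hlo hij hhi).X_pow_mul _

end QLogConcaveOn

lemma StronglyQLogConcave.congr {lo hi : ℕ} {a b : ℕ → ℝ[X]} (h : StronglyQLogConcave lo hi a)
    (hab : ∀ i, lo ≤ i → i ≤ hi → a i = b i) : StronglyQLogConcave lo hi b := by
  obtain ⟨hzero, hconc⟩ := h
  refine ⟨fun i j l hi hij hjl hl hbi hbl => ?_, fun i j hlo hij hhi => ?_⟩
  · rw [← hab j (by omega) (by omega)]
    exact hzero i j l hi hij hjl hl (by rwa [hab i hi (by omega)]) (by rwa [hab l (by omega) hl])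
  · rw [← hab i (by omega) (by omega), ← hab j (by omega) (by omega),
      ← hab (i - 1) (by omega) (by omega), ← hab (j + 1) (by omega) (by omega)]
    exact hconc i j hlo hij hhi

lemma stronglyQLogConcave_of_le {lo hi : ℕ} (a : ℕ → ℝ[X]) (h : hi ≤ lo + 1) :
    StronglyQLogConcave lo hi a :=
  ⟨fun _ _ _ _ _ _ _ => by omega, fun _ _ _ _ _ => by omega⟩

lemma stronglyQLogConcave_X_pow_mul_prefixSums {m : ℕ} {a : ℕ → ℝ[X]}
    (hnn : ∀ k, CoeffNonneg (a k)) (h0 : a 0 = 0) (h : QLogConcaveOn 1 m a) :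
    StronglyQLogConcave 1 (m + 1) fun i => X ^ (m + 1 - i) * ∑ k ∈ range i, a k := by
  refine ⟨fun i j l _ hij _ _ hi _ => ?_,
    ((h.of_apply_zero hnn h0).prefixSums hnn).X_pow_sub_mul le_rfl⟩
  exact mul_ne_zero (pow_ne_zero _ X_ne_zero)
    (sum_ne_zero_of_subset hnn (range_subset_range.2 hij.le) (right_ne_zero_of_mul hi))

lemma stronglyQLogConcave_X_pow_mul_suffixSums {m : ℕ} {a : ℕ → ℝ[X]}
    (hnn : ∀ k, CoeffNonneg (a k)) (h : QLogConcaveOn 1 m a) :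
    StronglyQLogConcave 1 (m + 1) fun i => X ^ (m + 1 - i) * ∑ k ∈ Icc i m, a k := by
  refine ⟨fun i j l _ _ hjl _ _ hl => ?_, (h.suffixSums hnn).X_pow_sub_mul le_rfl⟩
  exact mul_ne_zero (pow_ne_zero _ X_ne_zero)
    (sum_ne_zero_of_subset hnn (Icc_subset_Icc_left hjl.le) (right_ne_zero_of_mul hl))

open Equiv

def extendLast {m : ℕ} (v : Fin (m + 1)) (σ : Perm (Fin m)) : Perm (Fin (m + 1)) :=
  finSuccEquivLast.trans (σ.optionCongr.trans (finSuccEquiv' v).symm)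

@[simp] lemma extendLast_last {m : ℕ} (v : Fin (m + 1)) (σ : Perm (Fin m)) :
    extendLast v σ (Fin.last m) = v := by
  simp [extendLast]

@[simp] lemma extendLast_castSucc {m : ℕ} (v : Fin (m + 1)) (σ : Perm (Fin m)) (a : Fin m) :
    extendLast v σ a.castSucc = v.succAbove (σ a) := by
  simp [extendLast]

lemma extendLast_injective {m : ℕ} (v : Fin (m + 1)) : Function.Injective (extendLast v) :=
  fun σ τ h => Equiv.ext fun a => by simpa using congrArg (fun w => w a.castSucc) h

lemma exists_extendLast_eq {m : ℕ} (w : Perm (Fin (m + 1))) :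
    ∃ σ, extendLast (w (Fin.last m)) σ = w := by
  set E : Perm (Option (Fin m)) :=
    (finSuccEquivLast.symm.trans w).trans (finSuccEquiv' (w (Fin.last m)))
  have hE : (removeNone E).optionCongr = E := by
    simp [E, finSuccEquiv'_at, Perm.one_def]
  refine ⟨removeNone E, ?_⟩
  ext a
  simp [extendLast, hE, E]

lemma invNum_eq_sum {n : ℕ} (w : Perm (Fin n)) :
    invNum w = ∑ b, ∑ a, if a < b ∧ w b < w a then 1 else 0 := by
  rw [invNum, card_filter, Fintype.sum_prod_type, Finset.sum_comm]

lemma invNum_extendLast {m : ℕ} (v : Fin (m + 1)) (σ : Perm (Fin m)) :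
    invNum (extendLast v σ) = invNum σ + (m - v) := by
  rw [invNum_eq_sum, invNum_eq_sum]
  simp only [Fin.sum_univ_castSucc, extendLast_castSucc, extendLast_last,
    Fin.castSucc_lt_castSucc_iff, Fin.succAbove_lt_succAbove_iff, Fin.castSucc_lt_last,
    Fin.lt_succAbove_iff_le_castSucc, not_lt.2 (Fin.le_last _), true_and, false_and, if_false,
    add_zero]
  congr 1
  rw [Equiv.sum_comp σ (fun y => if v ≤ y.castSucc then 1 else 0), Finset.sum_boole]
  have hsplit := Finset.card_filter_add_card_filter_not (s := univ) (fun y : Fin m => (y : ℕ) < v)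
  rw [Fin.card_filter_val_lt, card_univ, Fintype.card_fin] at hsplit
  simp only [Fin.le_def, Fin.val_castSucc, Nat.cast_id, not_lt] at hsplit ⊢
  omega

lemma lt_of_mem_desSet {n : ℕ} {w : Perm (Fin n)} {x : ℕ} (hx : x ∈ DesSet w) : x < n := by
  obtain ⟨a, ⟨b, hab, -⟩, rfl⟩ := by simpa [DesSet] using hx
  omega

lemma mem_desSet_iff {m : ℕ} (w : Perm (Fin (m + 1))) (x : ℕ) :
    x ∈ DesSet w ↔ ∃ a : Fin m, w a.succ < w a.castSucc ∧ (a : ℕ) + 1 = x := by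
  simp only [DesSet, mem_image, mem_filter, mem_univ, true_and]
  constructor
  · rintro ⟨a, ⟨b, hab, hw⟩, rfl⟩
    refine ⟨⟨a, by omega⟩, ?_, rfl⟩
    convert hw using 2 <;> ext <;> simp [hab]
  · rintro ⟨a, hw, rfl⟩
    exact ⟨a.castSucc, ⟨a.succ, by simp, hw⟩, by simp⟩

lemma mem_desSet_extendLast {r : ℕ} (v : Fin (r + 2)) (σ : Perm (Fin (r + 1))) (x : ℕ) :
    x ∈ DesSet (extendLast v σ) ↔ x ∈ DesSet σ ∨ (v ≤ (σ (Fin.last r)).castSucc ∧ x = r + 1) := by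
  rw [mem_desSet_iff, mem_desSet_iff, Fin.exists_fin_succ']
  simp [-Fin.castSucc_succ, Fin.succ_castSucc, Fin.succAbove_lt_succAbove_iff,
    Fin.lt_succAbove_iff_le_castSucc, eq_comm]

lemma desSet_extendLast_eq_iff_of_notMem {r : ℕ} {S : Finset ℕ} (hS : r + 1 ∉ S)
    (v : Fin (r + 2)) (σ : Perm (Fin (r + 1))) :
    DesSet (extendLast v σ) = S ↔ DesSet σ = S ∧ (σ (Fin.last r)).castSucc < v := by
  constructor
  · rintro rfl
    have hv : ¬ v ≤ (σ (Fin.last r)).castSucc := fun hv =>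
      hS ((mem_desSet_extendLast v σ _).2 (Or.inr ⟨hv, rfl⟩))
    refine ⟨?_, not_le.1 hv⟩
    ext x
    simp [mem_desSet_extendLast, hv]
  · rintro ⟨rfl, hv⟩
    ext x
    simp [mem_desSet_extendLast, not_le.2 hv]

lemma desSet_extendLast_eq_iff_of_mem {r : ℕ} {S : Finset ℕ} (hS : r + 1 ∈ S)
    (v : Fin (r + 2)) (σ : Perm (Fin (r + 1))) :
    DesSet (extendLast v σ) = S ↔ DesSet σ = S.erase (r + 1) ∧ v ≤ (σ (Fin.last r)).castSucc := by
  have hσ : r + 1 ∉ DesSet σ := fun h => (lt_of_mem_desSet h).false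
  constructor
  · rintro rfl
    have hv : v ≤ (σ (Fin.last r)).castSucc := by
      simpa [mem_desSet_extendLast, hσ] using hS
    refine ⟨?_, hv⟩
    ext x
    simp only [mem_erase, mem_desSet_extendLast, hv, true_and]
    by_cases hx : x = r + 1
    · simp [hx, hσ]
    · simp [hx]
  · rintro ⟨h, hv⟩
    ext x
    simp only [mem_desSet_extendLast, h, mem_erase, hv, true_and]
    by_cases hx : x = r + 1
    · simp [hx, hS]
    · simp [hx]

lemma bkpoly_succ_eq_sum (S : Finset ℕ) (m k : ℕ) :
    bkpoly S (m + 1) k = ∑ w ∈ univ.filter (fun w : Perm (Fin (m + 1)) =>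
      DesSet w = S ∧ (w (Fin.last m) : ℕ) + 1 = k), X ^ invNum w := by
  refine sum_congr (filter_congr fun w _ => and_congr_right fun _ => ?_) fun _ _ => rfl
  constructor
  · rintro ⟨j, hj, hwj⟩
    rwa [show j = Fin.last m from Fin.ext (by simpa using hj)] at hwj
  · exact fun h => ⟨Fin.last m, by simp, h⟩

lemma sum_bkpoly_eq_sum (S t : Finset ℕ) (m : ℕ) :
    ∑ k ∈ t, bkpoly S (m + 1) k = ∑ w ∈ univ.filter (fun w : Perm (Fin (m + 1)) =>
      DesSet w = S ∧ (w (Fin.last m) : ℕ) + 1 ∈ t), X ^ invNum w := by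
  rw [← sum_fiberwise_of_maps_to (g := fun w : Perm (Fin (m + 1)) => (w (Fin.last m) : ℕ) + 1)
    (t := t) (fun w hw => (mem_filter.1 hw).2.2)]
  refine sum_congr rfl fun k hk => ?_
  rw [bkpoly_succ_eq_sum, filter_filter]
  refine sum_congr (filter_congr fun w _ => ?_) fun _ _ => rfl
  constructor
  · rintro ⟨hw, rfl⟩; exact ⟨⟨hw, hk⟩, rfl⟩
  · rintro ⟨⟨hw, -⟩, rfl⟩; exact ⟨hw, rfl⟩

lemma bkpoly_add_two_eq (S : Finset ℕ) (r : ℕ) (v : Fin (r + 2)) :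
    bkpoly S (r + 2) (v + 1) = X ^ (r + 1 - v) * ∑ σ ∈ univ.filter
      (fun σ : Perm (Fin (r + 1)) => DesSet (extendLast v σ) = S), X ^ invNum σ := by
  rw [bkpoly_succ_eq_sum, mul_sum]
  symm
  refine sum_nbij (extendLast v) (fun σ hσ => ?_) (extendLast_injective v).injOn
    (fun w hw => ?_) (fun σ _ => ?_)
  · simp_all
  · obtain ⟨hwS, hwv⟩ := by simpa using hw
    obtain ⟨σ, hσ⟩ := exists_extendLast_eq w
    rw [Fin.ext hwv] at hσ
    exact ⟨σ, by simpa [hσ] using hwS, hσ⟩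
  · rw [invNum_extendLast, pow_add, mul_comm]

lemma bkpoly_add_two_of_notMem {S : Finset ℕ} {r : ℕ} (hS : r + 1 ∉ S) {i : ℕ} (hi : 1 ≤ i)
    (hir : i ≤ r + 2) :
    bkpoly S (r + 2) i = X ^ (r + 2 - i) * ∑ k ∈ range i, bkpoly S (r + 1) k := by
  obtain ⟨v, rfl⟩ : ∃ v : Fin (r + 2), (v : ℕ) + 1 = i := ⟨⟨i - 1, by omega⟩, by simp; omega⟩
  rw [bkpoly_add_two_eq, sum_bkpoly_eq_sum, show r + 2 - (v + 1) = r + 1 - v by omega]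
  congr 2
  refine filter_congr fun σ _ => ?_
  rw [desSet_extendLast_eq_iff_of_notMem hS, mem_range, Fin.lt_def, Fin.val_castSucc]
  exact and_congr_right' (by omega)

lemma bkpoly_add_two_of_mem {S : Finset ℕ} {r : ℕ} (hS : r + 1 ∈ S) {i : ℕ} (hi : 1 ≤ i)
    (hir : i ≤ r + 2) :
    bkpoly S (r + 2) i =
      X ^ (r + 2 - i) * ∑ k ∈ Icc i (r + 1), bkpoly (S.erase (r + 1)) (r + 1) k := by
  obtain ⟨v, rfl⟩ : ∃ v : Fin (r + 2), (v : ℕ) + 1 = i := ⟨⟨i - 1, by omega⟩, by simp; omega⟩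
  rw [bkpoly_add_two_eq, sum_bkpoly_eq_sum, show r + 2 - (v + 1) = r + 1 - v by omega]
  congr 2
  refine filter_congr fun σ _ => ?_
  rw [desSet_extendLast_eq_iff_of_mem hS, mem_Icc, Fin.le_def, Fin.val_castSucc]
  exact and_congr_right' (by have := (σ (Fin.last r)).isLt; omega)

lemma coeffNonneg_bkpoly (S : Finset ℕ) (n k : ℕ) : CoeffNonneg (bkpoly S n k) :=
  coeffNonneg_sum _ fun w m => by rw [coeff_X_pow]; positivity

lemma bkpoly_zero (S : Finset ℕ) (n : ℕ) : bkpoly S n 0 = 0 := by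
  simp [bkpoly]

theorem stmt5_general (S : Finset ℕ) (n : ℕ) :
    StronglyQLogConcave 1 n (bkpoly S n) := by
  induction n generalizing S with
  | zero => exact stronglyQLogConcave_of_le _ (by omega)
  | succ m ih =>
    obtain _ | r := m
    · exact stronglyQLogConcave_of_le _ (by omega)
    by_cases hS : r + 1 ∈ S
    · exact (stronglyQLogConcave_X_pow_mul_suffixSums (coeffNonneg_bkpoly _ _) (ih _).2).congr
        fun i hi hir => (bkpoly_add_two_of_mem hS hi hir).symm
    · exact (stronglyQLogConcave_X_pow_mul_prefixSums (coeffNonneg_bkpoly _ _) (bkpoly_zero _ _)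
        (ih S).2).congr fun i hi hir => (bkpoly_add_two_of_notMem hS hi hir).symm

/-- the sequence `(b_k(S,n;q))_{k=1,…,n}` is strongly q-log concave. -/
theorem stmt5 (S : Finset ℕ) (n : ℕ) (hn : 1 ≤ n)
    (hS : ∀ s ∈ S, 1 ≤ s ∧ s ≤ n - 1) :
    StronglyQLogConcave 1 n (bkpoly S n) :=
  stmt5_general S n

end
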